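/- arXiv:1905.06555 — 2 statements merged into one kernel-verified Lean document; each statement's English description precedes it below -/
import Mathlib

section
/- For fixed μ ∈ ℂ and integer 0 ≤ m ≤ δ−1, the squared L² norm ∫₀^{τ₂}∫₀^{δ} e^{−2π(z₂+μ₂)²/τ₂} |θ_m(z,μ)|² dz₁ dz₂ equals √(τ₂/2) · δ · e^{2πm²τ₂/δ²}; in particular it is independent of μ. -/
/-!
Write `z = x + iy` and `r = m/δ`. Then `θ_m(x + iy, μ) = ∑ₖ cₖ(y) e^{2πi(k+r)x}` with `cₖ(y)` a
Jacobi theta term times a phase, and the exponentials are orthogonal on `[0, δ]`, so the inner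
integral is `δ ∑ₖ |cₖ(y)|²`. Completing the square, the weight times `|cₖ(y)|²` is `e^{2πτ₂r²}`
times the Gaussian `e^{-2π(y + kτ₂ + μ₂ + rτ₂)²/τ₂}`; its translates by `kτ₂` tile the line, so
integrating the sum over `y ∈ [0, τ₂]` gives the Gaussian integral `√(τ₂/2)`, whatever `μ` is.
-/

open Complex Real

/-- The `μ`-translated theta functions `θ_m(z,μ)`. -/
noncomputable def thetaM2 (τ : ℂ) (δ : ℕ) (m : ℤ) (z μ : ℂ) : ℂ :=
  ∑' k : ℤ, Complex.exp (π * Complex.I * (k : ℂ) ^ 2 * τ) *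
    Complex.exp (2 * π * Complex.I * τ * ((m : ℂ) / (δ : ℂ)) * (k : ℂ)) *
    Complex.exp (2 * π * Complex.I * (((k : ℂ) * (δ : ℂ) + (m : ℂ)) / (δ : ℂ)) * (z + μ))

open MeasureTheory Set intervalIntegral ComplexConjugate

section Periodization

variable {E : Type*} [NormedAddCommGroup E] [NormedSpace ℝ E] {f : ℝ → E} {T : ℝ}

theorem MeasureTheory.Integrable.hasSum_intervalIntegral_comp_add_int_mul (hf : Integrable f)
    (hT : 0 < T) : HasSum (fun n : ℤ => ∫ x in (0 : ℝ)..T, f (x + n * T)) (∫ x, f x) := by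
  have hpieces : ∀ n : ℤ, ∫ x in (0 : ℝ)..T, f (x + n * T) =
      ∫ x in Ioc (0 + n • T) (0 + (n + 1) • T), f x := by
    intro n
    rw [integral_comp_add_right, integral_of_le (by linarith)]
    congr 2
    simp only [zero_add, zsmul_eq_mul, Int.cast_add, Int.cast_one]
    congr 1
    ring
  simp_rw [hpieces]
  rw [← setIntegral_univ, ← iUnion_Ioc_add_zsmul hT 0]
  exact hasSum_integral_iUnion (fun _ => measurableSet_Ioc) (pairwise_disjoint_Ioc_add_zsmul 0 T)
    hf.integrableOn

theorem MeasureTheory.Integrable.intervalIntegral_tsum_comp_add_int_mul (hf : Integrable f)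
    (hT : 0 < T) : ∫ x in (0 : ℝ)..T, ∑' n : ℤ, f (x + n * T) = ∫ x, f x := by
  rw [integral_of_le hT.le, ← integral_tsum_of_summable_integral_norm]
  · simp_rw [← integral_of_le hT.le]
    exact (hf.hasSum_intervalIntegral_comp_add_int_mul hT).tsum_eq
  · exact fun n => (hf.comp_add_right (n * T)).integrableOn
  · simp_rw [← integral_of_le hT.le]
    exact (hf.norm.hasSum_intervalIntegral_comp_add_int_mul hT).summable

end Periodization

theorem integral_exp_two_pi_I_int_mul (δ : ℕ) (n : ℤ) :
    ∫ x in (0 : ℝ)..δ, cexp (2 * π * I * n * x) = if n = 0 then (δ : ℂ) else 0 := by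
  split_ifs with hn
  · simp [hn]
  have hc : 2 * π * I * n ≠ 0 := by simp [pi_ne_zero, I_ne_zero, hn]
  have hperiod : cexp (2 * π * I * n * δ) = 1 := by
    rw [← exp_int_mul_two_pi_mul_I (n * δ)]
    congr 1
    push_cast
    ring
  rw [integral_exp_mul_complex hc]
  simp [hperiod]

theorem integral_exp_mul_conj_exp (δ : ℕ) (r : ℝ) (k j : ℤ) :
    ∫ x in (0 : ℝ)..δ, cexp (2 * π * I * (k + r) * x) * conj (cexp (2 * π * I * (j + r) * x)) =
      if k = j then (δ : ℂ) else 0 := by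
  have h : ∀ x : ℝ, cexp (2 * π * I * (k + r) * x) * conj (cexp (2 * π * I * (j + r) * x)) =
      cexp (2 * π * I * (k - j : ℤ) * x) := by
    intro x
    rw [← exp_conj, ← Complex.exp_add]
    congr 1
    simp only [map_mul, map_add, conj_ofReal, conj_I, map_intCast, map_ofNat]
    push_cast
    ring
  simp_rw [h, integral_exp_two_pi_I_int_mul, sub_eq_zero]

theorem hasSum_mul_conj_of_summable_norm {ι : Type*} {a : ι → ℂ} (ha : Summable (‖a ·‖)) :
    HasSum (fun p : ι × ι => a p.1 * conj (a p.2)) (‖∑' i, a i‖ ^ 2 : ℝ) := by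
  have ha' : Summable fun i => ‖conj (a i)‖ := by simpa using ha
  rw [ofReal_pow, ← mul_conj', conj_tsum, tsum_mul_tsum_of_summable_norm ha ha']
  exact (summable_mul_of_summable_norm ha ha').hasSum

theorem HasSum.ite_fst_eq_snd {ι α : Type*} [DecidableEq ι] [AddCommMonoid α]
    [TopologicalSpace α] {f : ι → α} {a : α} (hf : HasSum f a) : HasSum (fun p : ι × ι => if p.1 = p.2 then f p.1 else 0) a := by
  have hdiag : Function.Injective fun i : ι => (i, i) := fun _ _ h => (Prod.ext_iff.1 h).1
  rw [← hdiag.hasSum_iff]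
  · simpa [Function.comp_def] using hf
  · rintro ⟨i, j⟩ hij
    rw [if_neg]
    rintro (h : i = j)
    exact hij ⟨i, by rw [h]⟩

theorem Summable.sq_norm {ι E : Type*} [SeminormedAddCommGroup E] {c : ι → E} (hc : Summable (‖c ·‖)) :
    Summable fun i => ‖c i‖ ^ 2 := by
  refine hc.of_norm_bounded_eventually ?_
  filter_upwards [hc.tendsto_cofinite_zero.eventually (ge_mem_nhds one_pos)] with i hi
  rw [norm_pow, norm_norm, sq]
  exact mul_le_of_le_one_left (norm_nonneg _) hi

theorem integral_norm_sq_tsum_mul_exp {c : ℤ → ℂ} (hc : Summable (‖c ·‖)) (δ : ℕ) (r : ℝ) :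
    ∫ x in (0 : ℝ)..δ, ‖∑' k : ℤ, c k * cexp (2 * π * I * (k + r) * x)‖ ^ 2 =
      δ * ∑' k : ℤ, ‖c k‖ ^ 2 := by
  have he : ∀ (k : ℤ) (x : ℝ), ‖cexp (2 * π * I * (k + r) * x)‖ = 1 := fun k x => by
    simp [norm_exp]
  have hcc : Summable fun p : ℤ × ℤ => ‖c p.1‖ * ‖c p.2‖ :=
    hc.mul_of_nonneg hc (fun _ => norm_nonneg _) (fun _ => norm_nonneg _)
  have hsum : HasSum (fun p : ℤ × ℤ => ∫ x in (0 : ℝ)..δ,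
        c p.1 * cexp (2 * π * I * (p.1 + r) * x) * conj (c p.2 * cexp (2 * π * I * (p.2 + r) * x)))
      (∫ x in (0 : ℝ)..δ, ((‖∑' k : ℤ, c k * cexp (2 * π * I * (k + r) * x)‖ ^ 2 : ℝ) : ℂ)) :=
    hasSum_integral_of_dominated_convergence (fun p _ => ‖c p.1‖ * ‖c p.2‖)
      (fun p => by fun_prop) (fun p => .of_forall fun x _ => by simp [he])
      (.of_forall fun _ _ => hcc) intervalIntegrable_const
      (.of_forall fun x _ => hasSum_mul_conj_of_summable_norm
        (a := fun k => c k * cexp (2 * π * I * (k + r) * x)) (by simpa [he] using hc))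
  have hterm : ∀ k j : ℤ, ∫ x in (0 : ℝ)..δ,
      c k * cexp (2 * π * I * (k + r) * x) * conj (c j * cexp (2 * π * I * (j + r) * x)) =
        if k = j then (δ * ‖c k‖ ^ 2 : ℂ) else 0 := by
    intro k j
    simp_rw [map_mul, mul_mul_mul_comm (c k) (cexp _)]
    rw [intervalIntegral.integral_const_mul, integral_exp_mul_conj_exp]
    split_ifs with h
    · rw [h, mul_conj']; ring
    · rw [mul_zero]
  simp_rw [hterm] at hsum
  apply ofReal_injective
  rw [← intervalIntegral.integral_ofReal]
  have hdiag : HasSum (fun p : ℤ × ℤ => if p.1 = p.2 then (δ * ‖c p.1‖ ^ 2 : ℂ) else 0)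
      ((δ * ∑' k, ‖c k‖ ^ 2 : ℝ) : ℂ) := by
    refine HasSum.ite_fst_eq_snd (f := fun k => (δ * ‖c k‖ ^ 2 : ℂ)) ?_
    have := (hasSum_ofReal.2 hc.sq_norm.hasSum).mul_left (δ : ℂ)
    push_cast at this ⊢
    exact this
  exact hsum.unique hdiag

noncomputable def thetaFourierCoeff (τ μ : ℂ) (r y : ℝ) (k : ℤ) : ℂ :=
  jacobiTheta₂_term k (y * I + μ + r * τ) τ * cexp (2 * π * I * r * (y * I + μ))

theorem thetaM2_eq_tsum_thetaFourierCoeff (τ μ : ℂ) {δ : ℕ} (hδ : δ ≠ 0) (m : ℤ) (x y : ℝ) :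
    thetaM2 τ δ m (x + y * I) μ =
      ∑' k : ℤ, thetaFourierCoeff τ μ (m / δ) y k * cexp (2 * π * I * (k + (m / δ : ℝ)) * x) := by
  refine tsum_congr fun k => ?_
  have hδ' : (δ : ℂ) ≠ 0 := Nat.cast_ne_zero.2 hδ
  simp only [thetaFourierCoeff, jacobiTheta₂_term, ← Complex.exp_add]
  congr 1
  push_cast
  field_simp
  ring

theorem norm_thetaFourierCoeff (τ μ : ℂ) (r y : ℝ) (k : ℤ) :
    ‖thetaFourierCoeff τ μ r y k‖ =
      rexp (-π * k ^ 2 * τ.im - 2 * π * k * (y + μ.im + r * τ.im) - 2 * π * r * (y + μ.im)) := by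
  rw [thetaFourierCoeff, norm_mul, norm_jacobiTheta₂_term, Complex.norm_exp, ← Real.exp_add]
  congr 1
  simp only [add_re, add_im, mul_re, mul_im, ofReal_re, ofReal_im, I_re, I_im, re_ofNat, im_ofNat]
  ring

theorem summable_norm_thetaFourierCoeff {τ : ℂ} (hτ : 0 < τ.im) (μ : ℂ) (r y : ℝ) :
    Summable fun k => ‖thetaFourierCoeff τ μ r y k‖ := by
  simp only [thetaFourierCoeff, norm_mul]
  exact (summable_norm_iff.2 ((summable_jacobiTheta₂_term_iff _ _).2 hτ)).mul_right _

theorem exp_mul_norm_thetaFourierCoeff_sq {τ : ℂ} (hτ : 0 < τ.im) (μ : ℂ) (r y : ℝ) (k : ℤ) :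
    rexp (-2 * π * (y + μ.im) ^ 2 / τ.im) * ‖thetaFourierCoeff τ μ r y k‖ ^ 2 =
      rexp (2 * π * τ.im * r ^ 2) *
        rexp (-(2 * π / τ.im) * (y + k * τ.im + (μ.im + r * τ.im)) ^ 2) := by
  rw [norm_thetaFourierCoeff, ← Real.exp_nat_mul, ← Real.exp_add, ← Real.exp_add]
  congr 1
  field_simp
  ring

theorem thetaM2_norm_sq_general (τ : ℂ) (hτ : 0 < τ.im) (δ : ℕ) (hδ : 1 ≤ δ) (μ : ℂ)
    (m : ℤ) :
    (∫ z₂ in (0:ℝ)..τ.im, ∫ z₁ in (0:ℝ)..(δ:ℝ),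
      Real.exp (-2 * π * (z₂ + μ.im) ^ 2 / τ.im) *
        ‖thetaM2 τ δ m (z₁ + z₂ * Complex.I) μ‖ ^ 2) =
      Real.sqrt (τ.im / 2) * δ * Real.exp (2 * π * (m : ℝ) ^ 2 * τ.im / (δ : ℝ) ^ 2) := by
  set T := τ.im
  set r : ℝ := m / δ
  set g : ℝ → ℝ := fun y =>
    δ * rexp (2 * π * T * r ^ 2) * rexp (-(2 * π / T) * (y + (μ.im + r * T)) ^ 2)
  have hinner : ∀ y : ℝ, ∫ x in (0 : ℝ)..δ, rexp (-2 * π * (y + μ.im) ^ 2 / T) *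
      ‖thetaM2 τ δ m (x + y * I) μ‖ ^ 2 = ∑' k : ℤ, g (y + k * T) := by
    intro y
    simp_rw [thetaM2_eq_tsum_thetaFourierCoeff τ μ (by omega : δ ≠ 0) m]
    rw [intervalIntegral.integral_const_mul,
      integral_norm_sq_tsum_mul_exp (summable_norm_thetaFourierCoeff hτ μ r y), mul_left_comm,
      ← tsum_mul_left, ← tsum_mul_left]
    refine tsum_congr fun k => ?_
    rw [exp_mul_norm_thetaFourierCoeff_sq hτ]
    ring
  have hg : Integrable g :=
    ((integrable_exp_neg_mul_sq (by positivity)).comp_add_right _).const_mul _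
  have hgauss : ∫ y, g y = δ * rexp (2 * π * T * r ^ 2) * √(T / 2) := by
    rw [MeasureTheory.integral_const_mul,
      integral_add_right_eq_self (fun y => rexp (-(2 * π / T) * y ^ 2)), integral_gaussian]
    congr 2
    field_simp
  have hr : 2 * π * T * r ^ 2 = 2 * π * (m : ℝ) ^ 2 * T / (δ : ℝ) ^ 2 := by
    simp only [r]
    field_simp
  rw [intervalIntegral.integral_congr fun y _ => hinner y,
    hg.intervalIntegral_tsum_comp_add_int_mul hτ, hgauss, hr]
  ring

/-- The squared `L²` norm of `θ_m(·,μ)` with weight `e^{−2π(z₂+μ₂)²/τ₂}` over the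
fundamental domain `[0,δ]×[0,τ₂]` equals `√(τ₂/2)·δ·e^{2πm²τ₂/δ²}`; in
particular it is independent of `μ`. -/
theorem thetaM2_norm_sq (τ : ℂ) (hτ : 0 < τ.im) (δ : ℕ) (hδ : 1 ≤ δ) (μ : ℂ)
    (m : ℤ) (hm0 : 0 ≤ m) (hm : m ≤ (δ : ℤ) - 1) :
    (∫ z₂ in (0:ℝ)..τ.im, ∫ z₁ in (0:ℝ)..(δ:ℝ),
      Real.exp (-2 * π * (z₂ + μ.im) ^ 2 / τ.im) *
        ‖thetaM2 τ δ m (z₁ + z₂ * Complex.I) μ‖ ^ 2) =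
      Real.sqrt (τ.im / 2) * δ * Real.exp (2 * π * (m : ℝ) ^ 2 * τ.im / (δ : ℝ) ^ 2) :=
  thetaM2_norm_sq_general τ hτ δ hδ μ m
end

section
/- For any μ ∈ ℂ, the functions θ_m(·, μ), m = 0, …, δ−1, are linearly independent over ℂ as functions on ℂ. -/
/-!
Translation `z ↦ z + 1` multiplies `θ_m(·, μ)` by `e^{2πi m/δ}`, so the `θ_m` are eigenvectors of a
single linear operator with the `δ` distinct eigenvalues `e^{2πi m/δ}`, provided they are nonzero.
Up to an exponential factor, `θ_m(·, μ)` is a translate of Jacobi's `θ(·, τ)`, which is not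
identically zero because its integral over `[0, 1]`, its constant Fourier coefficient, equals `1`.
-/

open Complex Real

lemma integral_jacobiTheta₂_term_ofReal (n : ℤ) (τ : ℂ) :
    ∫ x : ℝ in 0..1, jacobiTheta₂_term n x τ = if n = 0 then 1 else 0 := by
  split_ifs with hn
  · simp [hn, jacobiTheta₂_term]
  have hc : 2 * π * I * n ≠ 0 := by simp [hn, pi_ne_zero]
  simp_rw [jacobiTheta₂_term, Complex.exp_add, intervalIntegral.integral_mul_const]
  rw [integral_exp_mul_complex hc, mul_comm (2 * π * I), mul_assoc, ofReal_one, mul_one,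
    exp_int_mul_two_pi_mul_I]
  simp

lemma integral_jacobiTheta₂_ofReal {τ : ℂ} (hτ : 0 < τ.im) :
    ∫ x : ℝ in 0..1, jacobiTheta₂ x τ = 1 := by
  let term (n : ℤ) : C(ℝ, ℂ) := ⟨fun x => jacobiTheta₂_term n x τ, by
    unfold jacobiTheta₂_term; fun_prop⟩
  have hsum : Summable fun n => ‖(term n).restrict
      (⟨Set.uIcc 0 1, isCompact_uIcc⟩ : TopologicalSpace.Compacts ℝ)‖ := by
    refine ((summable_jacobiTheta₂_term_iff 0 τ).mpr hτ).norm.of_nonneg_of_le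
      (fun _ => norm_nonneg _) fun n => ?_
    refine ContinuousMap.norm_le _ (norm_nonneg _) |>.mpr fun x => le_of_eq ?_
    simp [term, norm_jacobiTheta₂_term]
  have hswap := intervalIntegral.tsum_intervalIntegral_eq_of_summable_norm hsum
  simp only [term, ContinuousMap.coe_mk, integral_jacobiTheta₂_term_ofReal] at hswap
  simpa [jacobiTheta₂] using hswap.symm

lemma exists_jacobiTheta₂_ne_zero {τ : ℂ} (hτ : 0 < τ.im) : ∃ z, jacobiTheta₂ z τ ≠ 0 := by
  by_contra! h
  simpa [h] using integral_jacobiTheta₂_ofReal hτ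

lemma thetaM2_eq_jacobiTheta₂ {δ : ℕ} (hδ : δ ≠ 0) (τ : ℂ) (m : ℤ) (z μ : ℂ) :
    thetaM2 τ δ m z μ =
      cexp (2 * π * I * (m / δ) * (z + μ)) * jacobiTheta₂ (z + μ + m / δ * τ) τ := by
  rw [thetaM2, jacobiTheta₂, ← tsum_mul_left]
  refine tsum_congr fun k => ?_
  simp only [jacobiTheta₂_term, ← Complex.exp_add]
  congr 1
  field_simp
  ring

lemma thetaM2_add_one {δ : ℕ} (hδ : δ ≠ 0) (τ : ℂ) (m : ℤ) (z μ : ℂ) :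
    thetaM2 τ δ m (z + 1) μ = cexp (2 * π * I * (m / δ)) * thetaM2 τ δ m z μ := by
  rw [thetaM2_eq_jacobiTheta₂ hδ, thetaM2_eq_jacobiTheta₂ hδ, add_right_comm z 1,
    add_right_comm _ 1, jacobiTheta₂_add_left, ← mul_assoc, ← Complex.exp_add]
  ring_nf

lemma thetaM2_ne_zero {τ : ℂ} (hτ : 0 < τ.im) {δ : ℕ} (hδ : δ ≠ 0) (m : ℤ) (μ : ℂ) :
    (fun z => thetaM2 τ δ m z μ) ≠ 0 := by
  obtain ⟨w, hw⟩ := exists_jacobiTheta₂_ne_zero hτ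
  refine Function.ne_iff.mpr ⟨w - μ - m / δ * τ, ?_⟩
  rw [thetaM2_eq_jacobiTheta₂ hδ, show w - μ - m / δ * τ + μ + m / δ * τ = w by ring]
  exact mul_ne_zero (Complex.exp_ne_zero _) hw

lemma hasEigenvector_thetaM2 {τ : ℂ} (hτ : 0 < τ.im) {δ : ℕ} (hδ : δ ≠ 0) (m : ℤ) (μ : ℂ) :
    Module.End.HasEigenvector (LinearMap.funLeft ℂ ℂ (· + 1)) (cexp (2 * π * I * (m / δ)))
      (fun z => thetaM2 τ δ m z μ) :=
  ⟨Module.End.mem_eigenspace_iff.mpr <| funext fun z => thetaM2_add_one hδ τ m z μ,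
    thetaM2_ne_zero hτ hδ m μ⟩

lemma injective_exp_two_pi_I_mul_div (δ : ℕ) :
    Function.Injective fun m : Fin δ => cexp (2 * π * I * (m / δ)) := by
  intro i j hij
  have hζ := isPrimitiveRoot_exp δ i.pos.ne'
  refine Fin.ext <| hζ.pow_inj i.2 j.2 ?_
  simp only [← Complex.exp_nat_mul]
  convert hij using 2 <;> ring

theorem thetaM2_linearIndependent_general (τ : ℂ) (hτ : 0 < τ.im) (δ : ℕ)
    (μ : ℂ) :
    LinearIndependent ℂ (fun m : Fin δ => fun z : ℂ => thetaM2 τ δ (m : ℤ) z μ) :=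
  Module.End.eigenvectors_linearIndependent' (LinearMap.funLeft ℂ ℂ (· + 1)) _
    (injective_exp_two_pi_I_mul_div δ) _
    fun m => by simpa using hasEigenvector_thetaM2 hτ m.pos.ne' m μ

/-- For any `μ`, the functions `θ_m(·,μ)`, `m = 0,…,δ−1`, are linearly
independent over `ℂ` as functions on `ℂ`. -/
theorem thetaM2_linearIndependent (τ : ℂ) (hτ : 0 < τ.im) (δ : ℕ) (hδ : 1 ≤ δ)
    (μ : ℂ) :
    LinearIndependent ℂ (fun m : Fin δ => fun z : ℂ => thetaM2 τ δ (m : ℤ) z μ) :=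
  thetaM2_linearIndependent_general τ hτ δ μ
end
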